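/- Let m, n : ℕ and suppose that N does not divide m − n as integers, i.e. ¬ ((N : ℤ) ∣ (m : ℤ) - (n : ℤ)). If x ∈ (⨂[ℂ]^m V) ⊗[ℂ] (⨂[ℂ]^n (Module.Dual ℂ V)) satisfies (TensorProduct.map (U^{⊗m}) (Ū^{⊗n})) x = x for every U ∈ SU(N), then x = 0. (There are no SU(N)-singlets on a mixed space with m quarks and n antiquarks unless N divides m − n.) -/

import Mathlib

/-!
If `ζ` is a primitive `N`-th root of unity, the scalar matrix `ζ • 1` lies in `SU(N)` and acts on
`V^{⊗m} ⊗ (V^*)^{⊗n}` as multiplication by `ζ ^ (m - n)`, which is not `1` unless `N ∣ m - n`.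
A vector fixed by this central element must therefore vanish.
-/

open scoped TensorProduct

set_option synthInstance.maxHeartbeats 1000000
set_option maxHeartbeats 1000000

/-- The `m`-fold tensor power `U^{⊗m}` of the linear map given by the matrix `U`. -/
noncomputable def tpowMap (N m : ℕ) (U : Matrix (Fin N) (Fin N) ℂ) :
    (⨂[ℂ] _ : Fin m, (Fin N → ℂ)) →ₗ[ℂ] ⨂[ℂ] _ : Fin m, (Fin N → ℂ) :=
  PiTensorProduct.map fun _ => Matrix.toLin' U

/-- The `n`-fold tensor power `Ū^{⊗n}` of the contragredient (antifundamental) action of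
`U ∈ SU(N)` on the dual space, sending `f` to `f ∘ₗ Matrix.toLin' (U⁻¹)`. -/
noncomputable def dualTpowMap (N n : ℕ) (U : Matrix (Fin N) (Fin N) ℂ) :
    (⨂[ℂ] _ : Fin n, Module.Dual ℂ (Fin N → ℂ)) →ₗ[ℂ]
      ⨂[ℂ] _ : Fin n, Module.Dual ℂ (Fin N → ℂ) :=
  PiTensorProduct.map fun _ => (Matrix.toLin' U⁻¹).dualMap

theorem PiTensorProduct.map_smul_univ {R ι : Type*} [CommSemiring R] [Fintype ι]
    {s t : ι → Type*} [∀ i, AddCommMonoid (s i)] [∀ i, Module R (s i)]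
    [∀ i, AddCommMonoid (t i)] [∀ i, Module R (t i)] (c : ι → R) (f : ∀ i, s i →ₗ[R] t i) :
    PiTensorProduct.map (fun i => c i • f i) = (∏ i, c i) • PiTensorProduct.map f := by
  ext v
  simp only [LinearMap.compMultilinearMap_apply, PiTensorProduct.map_tprod,
    LinearMap.smul_apply, MultilinearMap.map_smul_univ]

theorem PiTensorProduct.map_smul_id {R M : Type*} [CommSemiring R] [AddCommMonoid M]
    [Module R M] (m : ℕ) (c : R) :
    PiTensorProduct.map (fun _ : Fin m => c • (LinearMap.id : M →ₗ[R] M)) = c ^ m • .id := by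
  rw [PiTensorProduct.map_smul_univ (fun _ => c), PiTensorProduct.map_id, Finset.prod_const,
    Finset.card_univ, Fintype.card_fin]

theorem Matrix.smul_one_mem_specialUnitaryGroup {n : Type*} [Fintype n] [DecidableEq n]
    {ζ : ℂ} (hζ : ζ ^ Fintype.card n = 1) :
    ζ • (1 : Matrix n n ℂ) ∈ Matrix.specialUnitaryGroup n ℂ := by
  refine Matrix.mem_specialUnitaryGroup_iff.mpr ⟨?_, by simp [hζ]⟩
  rw [Matrix.mem_unitaryGroup_iff]
  rcases isEmpty_or_nonempty n with hn | hn
  · exact Subsingleton.elim _ _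
  have hnorm : ‖ζ‖ = 1 := Complex.norm_eq_one_of_pow_eq_one hζ Fintype.card_ne_zero
  rw [star_smul, star_one, smul_mul_smul_comm, one_mul, Complex.star_def, Complex.mul_conj',
    hnorm, Complex.ofReal_one, one_pow, one_smul]

section ScalarMatrix

variable {N : ℕ} (ζ : ℂ)

theorem tpowMap_smul_one (m : ℕ) : tpowMap N m (ζ • 1) = ζ ^ m • LinearMap.id := by
  rw [tpowMap, map_smul, Matrix.toLin'_one, PiTensorProduct.map_smul_id]

theorem dualTpowMap_smul_one (hζ : ζ ≠ 0) (n : ℕ) :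
    dualTpowMap N n (ζ • 1) = ζ⁻¹ ^ n • LinearMap.id := by
  have hinv : (ζ • 1 : Matrix (Fin N) (Fin N) ℂ)⁻¹ = ζ⁻¹ • 1 :=
    Matrix.inv_eq_right_inv (by rw [smul_mul_smul_comm, one_mul, mul_inv_cancel₀ hζ, one_smul])
  have hdual : (Matrix.toLin' (ζ⁻¹ • 1 : Matrix (Fin N) (Fin N) ℂ)).dualMap = ζ⁻¹ • .id := by
    ext f v
    simp
  rw [dualTpowMap, hinv, hdual, PiTensorProduct.map_smul_id]

end ScalarMatrix

/-- If `N` does not divide `m - n`, there are no `SU(N)` singlets in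
`V^{⊗ m} ⊗ (V^*)^{⊗ n}`: any vector fixed by all `U^{⊗m} ⊗ Ū^{⊗n}` vanishes. -/
theorem no_singlets_of_not_dvd (N : ℕ) (hN : 0 < N) (m n : ℕ)
    (hdvd : ¬ ((N : ℤ) ∣ (m : ℤ) - (n : ℤ)))
    (x : (⨂[ℂ] _ : Fin m, (Fin N → ℂ)) ⊗[ℂ] (⨂[ℂ] _ : Fin n, Module.Dual ℂ (Fin N → ℂ)))
    (hx : ∀ U : Matrix.specialUnitaryGroup (Fin N) ℂ,
      TensorProduct.map (tpowMap N m (U : Matrix (Fin N) (Fin N) ℂ))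
        (dualTpowMap N n (U : Matrix (Fin N) (Fin N) ℂ)) x = x) :
    x = 0 := by
  obtain ⟨ζ, hζ⟩ : ∃ ζ : ℂ, IsPrimitiveRoot ζ N := ⟨_, Complex.isPrimitiveRoot_exp N hN.ne'⟩
  have hζ0 : ζ ≠ 0 := hζ.ne_zero hN.ne'
  have hcentral :=
    hx ⟨ζ • 1, Matrix.smul_one_mem_specialUnitaryGroup (by simpa using hζ.pow_eq_one)⟩
  simp only [tpowMap_smul_one, dualTpowMap_smul_one ζ hζ0, TensorProduct.map_smul_left,
    TensorProduct.map_smul_right, TensorProduct.map_id, smul_smul, LinearMap.smul_apply,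
    LinearMap.id_apply] at hcentral
  have hscalar : ζ⁻¹ ^ n * ζ ^ m ≠ 1 := by
    rw [← zpow_natCast, ← zpow_natCast, inv_zpow', ← zpow_add₀ hζ0, neg_add_eq_sub,
      Ne, hζ.zpow_eq_one_iff_dvd]
    exact hdvd
  by_contra hx0
  exact hscalar (smul_left_injective ℂ (m := x) hx0 (hcentral.trans (one_smul ℂ x).symm))
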